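/- arXiv:1612.02933 — 5 statements merged into one kernel-verified Lean document; each statement's English description precedes it below -/
import Mathlib

section
/- Let P1 ∈ ℝ^{n1×n1} and P2 ∈ ℝ^{n2×n2} be symmetric positive definite, C1 ∈ ℝ^{m×n1}, C2 ∈ ℝ^{m×n2}, and let D1, D2 ∈ ℝ^{m×m} be symmetric with D2 positive semidefinite and D1 D2 = 0. Define G0 = D1 + C1 P1^{-1} C1^T and H0 = D2 + C2 P2^{-1} C2^T. Then the block matrix [[P1 - C1^T D2 C1, -C1^T C2], [-C2^T C1, P2 - C2^T D1 C2]] is positive definite if and only if every complex eigenvalue of G0 H0 is real and strictly less than 1. -/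
/-!
Factor `D₂ = Eᵀ E`; then `D₁ D₂ = 0` forces `D₁ Eᵀ = 0`. Put `F = [Eᵀ C₂]` and
`K = diag(1, P₂)`, so that `F K⁻¹ Fᵀ = H₀`. Adjoining a variable `w` that carries `E C₁ x₁` turns
the block matrix into a 3 × 3 block matrix whose Schur complement with respect to the identity
block is the original matrix, and whose Schur complement with respect to `P₁` is
`K - Fᵀ G₀ F`; the cross terms with `D₁` vanish because `D₁ Eᵀ = 0`. Finally, congruence by
`K^{1/2}` shows that `K - Fᵀ G₀ F ≻ 0` iff the symmetric matrix `(F K^{-1/2})ᵀ G₀ (F K^{-1/2})`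
has all eigenvalues below `1`, and its nonzero eigenvalues are those of `G₀ F K⁻¹ Fᵀ = G₀ H₀`.
-/

open Matrix
open scoped ComplexOrder

namespace Matrix

variable {α β κ 𝕜 : Type*} [RCLike 𝕜]

theorem posDef_submatrix_equiv {M : Matrix β β 𝕜} (e : α ≃ β) :
    (M.submatrix e e).PosDef ↔ M.PosDef :=
  ⟨fun h => by simpa using h.submatrix e.symm.injective, fun h => h.submatrix e.injective⟩

theorem mul_conjTranspose_eq_zero_of_mul_eq_zero [Fintype α] [Fintype β] {A : Matrix κ α 𝕜}
    {E : Matrix β α 𝕜} (h : A * (Eᴴ * E) = 0) : A * Eᴴ = 0 := by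
  rw [← self_mul_conjTranspose_eq_zero, conjTranspose_mul, conjTranspose_conjTranspose,
    Matrix.mul_assoc, ← Matrix.mul_assoc Eᴴ, ← Matrix.mul_assoc, h, Matrix.zero_mul]

theorem transpose_fromCols_mul_mul_fromCols_of_mul_eq_zero {ι R : Type*} [Fintype ι]
    [Fintype κ] [Semiring R] {D : Matrix κ κ R} {E : Matrix ι κ R} (C : Matrix κ β R)
    (hED : E * D = 0) (hDE : D * Eᵀ = 0) :
    (fromCols Eᵀ C)ᵀ * D * fromCols Eᵀ C = fromBlocks 0 0 0 (Cᵀ * D * C) := by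
  rw [transpose_fromCols, transpose_transpose, fromRows_mul, fromRows_mul_fromCols, hED,
    Matrix.mul_assoc Cᵀ D Eᵀ, hDE]
  simp

theorem fromCols_mul_inv_fromBlocks_one_mul_transpose {ι R : Type*} [Fintype ι] [Fintype β]
    [DecidableEq ι] [DecidableEq β] [CommRing R] {P : Matrix β β R} (hP : IsUnit P)
    (E : Matrix ι κ R) (C : Matrix κ β R) :
    fromCols Eᵀ C * (fromBlocks (1 : Matrix ι ι R) 0 0 P)⁻¹ * (fromCols Eᵀ C)ᵀ =
      Eᵀ * E + C * P⁻¹ * Cᵀ := by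
  rw [inv_fromBlocks_zero₁₂_of_isUnit_iff 1 0 P (iff_of_true isUnit_one hP)]
  simp [fromCols_mul_fromBlocks, transpose_fromCols, fromCols_mul_fromRows]

variable [Fintype α] [Fintype β] [Fintype κ]

def SpectrumRealLtOne [DecidableEq α] (A : Matrix α α ℝ) : Prop :=
  ∀ μ ∈ spectrum ℂ (A.map Complex.ofReal), μ.im = 0 ∧ μ.re < 1

section Spectrum

variable [DecidableEq α] [DecidableEq β]

theorem IsHermitian.spectrum_map_ofReal {R : Matrix α α ℝ} (hR : R.IsHermitian) :
    spectrum ℂ (R.map Complex.ofReal) = Complex.ofReal '' spectrum ℝ R := by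
  ext μ
  rw [mem_spectrum_iff_isRoot_charpoly,
    show R.map Complex.ofReal = R.map Complex.ofRealHom from rfl, charpoly_map, hR.charpoly_eq,
    hR.spectrum_real_eq_range_eigenvalues]
  simp [Polynomial.map_prod, Polynomial.eval_prod, Finset.prod_eq_zero_iff, sub_eq_zero]
  exact exists_congr fun _ => eq_comm

open scoped Pointwise in
theorem posDef_one_sub_iff {R : Matrix α α ℝ} (hR : R.IsHermitian) :
    (1 - R).PosDef ↔ SpectrumRealLtOne R := by
  have h1R : (1 - R).IsHermitian := isHermitian_one.sub hR
  have hspec : spectrum ℝ (1 - R) = ({1} : Set ℝ) - spectrum ℝ R := by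
    rw [spectrum.singleton_sub_eq, map_one]
  rw [h1R.posDef_iff_eigenvalues_pos, SpectrumRealLtOne, hR.spectrum_map_ofReal,
    ← Set.forall_mem_range, ← h1R.spectrum_real_eq_range_eigenvalues, hspec]
  simp

theorem mem_spectrum_mul_comm {K : Type*} [Field K] {μ : K} (hμ : μ ≠ 0)
    (A : Matrix α β K) (B : Matrix β α K) :
    μ ∈ spectrum K (A * B) ↔ μ ∈ spectrum K (B * A) := by
  have h := congrArg (Polynomial.eval μ) (charpoly_mul_comm' A B)
  simp only [Polynomial.eval_mul, Polynomial.eval_pow, Polynomial.eval_X] at h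
  rw [mem_spectrum_iff_isRoot_charpoly, mem_spectrum_iff_isRoot_charpoly, Polynomial.IsRoot.def,
    Polynomial.IsRoot.def]
  constructor <;> intro h' <;> simp_all

theorem SpectrumRealLtOne.mul_comm {A : Matrix α β ℝ} {B : Matrix β α ℝ}
    (h : SpectrumRealLtOne (A * B)) : SpectrumRealLtOne (B * A) := by
  intro μ hμ
  rcases eq_or_ne μ 0 with rfl | hμ0
  · simp
  have hAB : (A * B).map Complex.ofReal = A.map Complex.ofReal * B.map Complex.ofReal :=
    Matrix.map_mul (f := Complex.ofRealHom)
  have hBA : (B * A).map Complex.ofReal = B.map Complex.ofReal * A.map Complex.ofReal :=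
    Matrix.map_mul (f := Complex.ofRealHom)
  refine h μ ?_
  rw [hAB, mem_spectrum_mul_comm hμ0]
  rwa [hBA] at hμ

theorem spectrumRealLtOne_mul_comm (A : Matrix α β ℝ) (B : Matrix β α ℝ) :
    SpectrumRealLtOne (A * B) ↔ SpectrumRealLtOne (B * A) :=
  ⟨SpectrumRealLtOne.mul_comm, SpectrumRealLtOne.mul_comm⟩

open scoped MatrixOrder in
theorem PosDef.exists_isSymm_isUnit_mul_self_eq {K : Matrix α α ℝ} (hK : K.PosDef) :
    ∃ U : Matrix α α ℝ, U.IsSymm ∧ IsUnit U ∧ U * U = K := by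
  have hU : CFC.sqrt K * CFC.sqrt K = K := CFC.sqrt_mul_sqrt_self K hK.posSemidef.nonneg
  refine ⟨CFC.sqrt K, ?_, isUnit_of_mul_isUnit_left (hU ▸ hK.isUnit), hU⟩
  exact isHermitian_iff_isSymm.mp (CFC.sqrt_nonneg K).posSemidef.isHermitian

theorem PosDef.posDef_sub_transpose_mul_mul_iff {K : Matrix α α ℝ} (hK : K.PosDef)
    {G : Matrix β β ℝ} (hG : G.IsHermitian) (B : Matrix β α ℝ) :
    (K - Bᵀ * G * B).PosDef ↔ SpectrumRealLtOne (G * (B * K⁻¹ * Bᵀ)) := by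
  obtain ⟨U, hUt, hU, rfl⟩ := hK.exists_isSymm_isUnit_mul_self_eq
  have hUinv : U⁻¹ᵀ = U⁻¹ := by rw [transpose_nonsing_inv, hUt.eq]
  have hconj : U * U - Bᵀ * G * B = star U * (1 - (B * U⁻¹)ᵀ * G * (B * U⁻¹)) * U := by
    have hdet := (isUnit_iff_isUnit_det U).mp hU
    rw [star_eq_conjTranspose, conjTranspose_eq_transpose_of_trivial, hUt.eq, transpose_mul, hUinv]
    simp only [Matrix.mul_sub, Matrix.sub_mul, Matrix.mul_one, ← Matrix.mul_assoc,
      mul_nonsing_inv U hdet, Matrix.one_mul]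
    simp only [Matrix.mul_assoc, nonsing_inv_mul U hdet, Matrix.mul_one]
  have hX : ((B * U⁻¹)ᵀ * G * (B * U⁻¹)).IsHermitian := by
    rw [← conjTranspose_eq_transpose_of_trivial]
    exact isHermitian_conjTranspose_mul_mul _ hG
  rw [hconj, hU.posDef_star_left_conjugate_iff, posDef_one_sub_iff hX, Matrix.mul_assoc,
    spectrumRealLtOne_mul_comm, Matrix.mul_assoc, transpose_mul, hUinv, Matrix.mul_assoc B,
    ← Matrix.mul_assoc U⁻¹, ← mul_inv_rev, Matrix.mul_assoc B]

end Spectrum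

section Blocks

variable [DecidableEq α] [DecidableEq β] [DecidableEq κ]

theorem PosDef.posDef_fromBlocks₁₁_iff {A : Matrix α α 𝕜} (hA : A.PosDef) (B : Matrix α β 𝕜)
    (D : Matrix β β 𝕜) :
    (fromBlocks A B Bᴴ D).PosDef ↔ (D - Bᴴ * A⁻¹ * B).PosDef := by
  have := hA.isUnit.invertible
  have hdet : (fromBlocks A B Bᴴ D).det = A.det * (D - Bᴴ * A⁻¹ * B).det := by
    rw [det_fromBlocks₁₁, invOf_eq_nonsing_inv]
  constructor
  · intro h
    refine ((hA.fromBlocks₁₁ B D).mp h.posSemidef).posDef_iff_det_ne_zero.mpr fun h0 => ?_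
    exact h.det_pos.ne' (by rw [hdet, h0, mul_zero])
  · intro h
    refine ((hA.fromBlocks₁₁ B D).mpr h.posSemidef).posDef_iff_det_ne_zero.mpr ?_
    rw [hdet]
    exact mul_ne_zero hA.det_pos.ne' h.det_pos.ne'

theorem PosDef.fromBlocks_one {P : Matrix β β 𝕜} (hP : P.PosDef) :
    (fromBlocks (1 : Matrix κ κ 𝕜) 0 0 P).PosDef := by
  simpa using (PosDef.one.posDef_fromBlocks₁₁_iff (0 : Matrix κ β 𝕜) P).mpr (by simpa using hP)

theorem posDef_fromBlocks_sub_conjTranspose_mul_self_iff (A : Matrix α α 𝕜) (X : Matrix κ α 𝕜)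
    (Y : Matrix α β 𝕜) (Z : Matrix β β 𝕜) :
    (fromBlocks (A - Xᴴ * X) Y Yᴴ Z).PosDef ↔
      (fromBlocks A (fromCols (-Xᴴ) Y) (fromCols (-Xᴴ) Y)ᴴ (fromBlocks 1 0 0 Z)).PosDef := by
  let σ : α ⊕ (κ ⊕ β) ≃ κ ⊕ (α ⊕ β) :=
    (Equiv.sumAssoc α κ β).symm.trans (((Equiv.sumComm α κ).sumCongr (Equiv.refl β)).trans
      (Equiv.sumAssoc κ α β))
  have hperm : (fromBlocks 1 (fromCols (-X) 0) (fromCols (-X) 0)ᴴ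
      (fromBlocks A Y Yᴴ Z)).submatrix σ σ =
      fromBlocks A (fromCols (-Xᴴ) Y) (fromCols (-Xᴴ) Y)ᴴ (fromBlocks 1 0 0 Z) := by
    ext (i | i | i) (j | j | j) <;> simp [σ, conjTranspose_fromCols_eq_fromRows_conjTranspose]
  rw [← hperm, posDef_submatrix_equiv, PosDef.one.posDef_fromBlocks₁₁_iff, inv_one,
    Matrix.mul_one, conjTranspose_fromCols_eq_fromRows_conjTranspose, fromRows_mul_fromCols]
  simp [sub_eq_add_neg, fromBlocks_neg, fromBlocks_add]

end Blocks

open scoped MatrixOrder in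
theorem PosSemidef.exists_eq_conjTranspose_mul_self [DecidableEq α] {D : Matrix α α 𝕜}
    (hD : D.PosSemidef) :
    ∃ E : Matrix α α 𝕜, D = Eᴴ * E :=
  CStarAlgebra.nonneg_iff_eq_star_mul_self.mp hD.nonneg

theorem IsSymm.posDef_iff {A : Matrix α α ℝ} (h : A.IsSymm) :
    A.PosDef ↔ ∀ x : α → ℝ, x ≠ 0 → 0 < x ⬝ᵥ A *ᵥ x := by
  rw [posDef_iff_dotProduct_mulVec, isHermitian_iff_isSymm]
  simp [h]

theorem posDef_fromBlocks_iff_spectrumRealLtOne [DecidableEq α] [DecidableEq β] [DecidableEq κ]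
    {P1 : Matrix α α ℝ} {P2 : Matrix β β ℝ} {D1 D2 : Matrix κ κ ℝ} (C1 : Matrix κ α ℝ)
    (C2 : Matrix κ β ℝ) (hP1 : P1.PosDef) (hP2 : P2.PosDef) (hD1 : D1.IsSymm)
    (hD2 : D2.PosSemidef) (hD12 : D1 * D2 = 0) :
    (fromBlocks (P1 - C1ᵀ * D2 * C1) (-(C1ᵀ * C2)) (-(C2ᵀ * C1)) (P2 - C2ᵀ * D1 * C2)).PosDef ↔
      SpectrumRealLtOne ((D1 + C1 * P1⁻¹ * C1ᵀ) * (D2 + C2 * P2⁻¹ * C2ᵀ)) := by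
  obtain ⟨E, rfl⟩ := hD2.exists_eq_conjTranspose_mul_self
  have hD1E : D1 * Eᵀ = 0 := mul_conjTranspose_eq_zero_of_mul_eq_zero hD12
  have hED1 : E * D1 = 0 := by simpa [hD1.eq] using congrArg transpose hD1E
  simp only [conjTranspose_eq_transpose_of_trivial]
  set F : Matrix κ (κ ⊕ β) ℝ := fromCols Eᵀ C2 with hF
  have hlift := posDef_fromBlocks_sub_conjTranspose_mul_self_iff P1 (E * C1) (-(C1ᵀ * C2))
    (P2 - C2ᵀ * D1 * C2)
  have hP1schur := hP1.posDef_fromBlocks₁₁_iff (-(C1ᵀ * F)) (fromBlocks 1 0 0 (P2 - C2ᵀ * D1 * C2))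
  simp only [conjTranspose_eq_transpose_of_trivial] at hlift hP1schur
  have hM : fromBlocks (P1 - C1ᵀ * (Eᵀ * E) * C1) (-(C1ᵀ * C2)) (-(C2ᵀ * C1)) (P2 - C2ᵀ * D1 * C2)
      = fromBlocks (P1 - (E * C1)ᵀ * (E * C1)) (-(C1ᵀ * C2)) (-(C1ᵀ * C2))ᵀ
          (P2 - C2ᵀ * D1 * C2) := by
    simp [Matrix.mul_assoc]
  have hB : fromCols (-(E * C1)ᵀ) (-(C1ᵀ * C2)) = -(C1ᵀ * F) := by
    simp [F, mul_fromCols, fromCols_neg]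
  have hschur : fromBlocks 1 0 0 (P2 - C2ᵀ * D1 * C2) - (-(C1ᵀ * F))ᵀ * P1⁻¹ * (-(C1ᵀ * F)) =
      fromBlocks 1 0 0 P2 - Fᵀ * (D1 + C1 * P1⁻¹ * C1ᵀ) * F := by
    have hK : fromBlocks 1 0 0 (P2 - C2ᵀ * D1 * C2) = fromBlocks 1 0 0 P2 - Fᵀ * D1 * F := by
      simp [F, transpose_fromCols_mul_mul_fromCols_of_mul_eq_zero C2 hED1 hD1E, sub_eq_add_neg,
        fromBlocks_neg, fromBlocks_add]
    rw [hK]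
    simp [Matrix.mul_add, Matrix.add_mul, transpose_mul, Matrix.mul_assoc, sub_sub]
  have hG0 : (D1 + C1 * P1⁻¹ * C1ᵀ).IsHermitian := by
    simpa using (isHermitian_iff_isSymm.mpr hD1).add
      (isHermitian_mul_mul_conjTranspose C1 hP1.inv.isHermitian)
  rw [hM, hlift, hB, hP1schur, hschur, hP2.fromBlocks_one.posDef_sub_transpose_mul_mul_iff hG0,
    hF, fromCols_mul_inv_fromBlocks_one_mul_transpose hP2.isUnit]

end Matrix

theorem stmt_3 {n1 n2 m : ℕ}
    (P1 : Matrix (Fin n1) (Fin n1) ℝ) (P2 : Matrix (Fin n2) (Fin n2) ℝ)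
    (C1 : Matrix (Fin m) (Fin n1) ℝ) (C2 : Matrix (Fin m) (Fin n2) ℝ)
    (D1 D2 : Matrix (Fin m) (Fin m) ℝ)
    (hP1symm : P1ᵀ = P1)
    (hP1pd : ∀ x : Fin n1 → ℝ, x ≠ 0 → 0 < x ⬝ᵥ P1.mulVec x)
    (hP2symm : P2ᵀ = P2)
    (hP2pd : ∀ x : Fin n2 → ℝ, x ≠ 0 → 0 < x ⬝ᵥ P2.mulVec x)
    (hD1symm : D1ᵀ = D1) (hD2symm : D2ᵀ = D2)
    (hD2psd : ∀ x : Fin m → ℝ, 0 ≤ x ⬝ᵥ D2.mulVec x)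
    (hD12 : D1 * D2 = 0) :
    (∀ x : (Fin n1 ⊕ Fin n2) → ℝ, x ≠ 0 →
        0 < x ⬝ᵥ (Matrix.fromBlocks
            (P1 - C1ᵀ * D2 * C1) (-(C1ᵀ * C2))
            (-(C2ᵀ * C1)) (P2 - C2ᵀ * D1 * C2)).mulVec x) ↔
      (∀ μ ∈ spectrum ℂ
          (((D1 + C1 * P1⁻¹ * C1ᵀ) * (D2 + C2 * P2⁻¹ * C2ᵀ)).map Complex.ofReal),
        μ.im = 0 ∧ μ.re < 1) := by
  have hP1 := (IsSymm.posDef_iff hP1symm).mpr hP1pd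
  have hP2 := (IsSymm.posDef_iff hP2symm).mpr hP2pd
  have hD2 : D2.PosSemidef :=
    .of_dotProduct_mulVec_nonneg (isHermitian_iff_isSymm.mpr hD2symm) fun x => by
      simpa using hD2psd x
  rw [← IsSymm.posDef_iff (by simp [IsSymm, fromBlocks_transpose, transpose_mul, Matrix.mul_assoc,
    hP1symm, hP2symm, hD1symm, hD2symm])]
  exact posDef_fromBlocks_iff_spectrumRealLtOne C1 C2 hP1 hP2 hD1symm hD2 hD12
end

section
/- Let A1 ∈ ℝ^{n1×n1}, B1 ∈ ℝ^{n1×m}, C1 ∈ ℝ^{m×n1}, D1 ∈ ℝ^{m×m} and A2 ∈ ℝ^{n2×n2}, B2 ∈ ℝ^{n2×m}, C2 ∈ ℝ^{m×n2}, D2 ∈ ℝ^{m×m} with D1, D2 symmetric and D1 D2 = 0. Suppose P1 ∈ ℝ^{n1×n1} and P2 ∈ ℝ^{n2×n2} are symmetric positive definite and L1, L2 are real matrices such that A1 P1^{-1} + P1^{-1} A1^T = -L1^T L1, B1 + A1 P1^{-1} C1^T = 0, A2 P2^{-1} + P2^{-1} A2^T = -L2^T L2, and B2 + A2 P2^{-1}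 C2^T = 0. Define the closed-loop matrix Ă = [[A1 + B1 D2 C1, B1 C2], [B2 C1, A2 + B2 D1 C2]] and Q = [[P1 - C1^T D2 C1, -C1^T C2], [-C2^T C1, P2 - C2^T D1 C2]]. Then Ă^T Q + Q Ă = -(R1^T R1 + R2^T R2), where R1 = [L1(P1 - C1^T D2 C1), -L1 C1^T C2] and R2 = [-L2 C2^T C1, L2(P2 - C2^T D1 C2)] (block row matrices). In particular, Ă^T Q + Q Ă is negative semidefinite. -/
/-!
Writing `T = diag(A₁P₁⁻¹, A₂P₂⁻¹)`, the relations `Bᵢ = -AᵢPᵢ⁻¹Cᵢᵀ` factor the closed-loop matrix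
as `Ă = T Q`. Since `Q` is symmetric, `ĂᵀQ + QĂ = Q (Tᵀ + T) Q`, and the two Lyapunov equations say
`Tᵀ + T = -LᵀL` with `L = diag(L₁, L₂)`. Hence `ĂᵀQ + QĂ = -(LQ)ᵀ(LQ)`, and the block rows of `LQ`
are `R₁` and `R₂`.
-/

open Matrix

namespace Matrix

variable {R : Type*} {k l m n n₁ n₂ : Type*}

theorem isUnit_of_dotProduct_mulVec_pos [Fintype n] [DecidableEq n] [Field R] [Preorder R]
    {P : Matrix n n R} (hP : ∀ x, x ≠ 0 → 0 < x ⬝ᵥ P *ᵥ x) : IsUnit P := by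
  refine mulVec_injective_iff_isUnit.1 fun x y hxy => by_contra fun hne => ?_
  have hpos := hP (x - y) (sub_ne_zero.2 hne)
  rw [mulVec_sub, hxy, sub_self, dotProduct_zero] at hpos
  exact lt_irrefl _ hpos

theorem dotProduct_transpose_mul_self_mulVec_nonneg [Fintype k] [Fintype n]
    [CommRing R] [LinearOrder R] [IsStrictOrderedRing R] (A : Matrix k n R) (x : n → R) :
    0 ≤ x ⬝ᵥ (Aᵀ * A) *ᵥ x := by
  rw [← mulVec_mulVec, dotProduct_mulVec, vecMul_transpose]
  exact Finset.sum_nonneg fun i _ => mul_self_nonneg _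

theorem dotProduct_mulVec_nonpos_of_eq_neg_add [Fintype k] [Fintype l] [Fintype n]
    [CommRing R] [LinearOrder R] [IsStrictOrderedRing R]
    {M : Matrix n n R} {A : Matrix k n R} {B : Matrix l n R} (hM : M = -(Aᵀ * A + Bᵀ * B))
    (x : n → R) : x ⬝ᵥ M *ᵥ x ≤ 0 := by
  rw [hM, neg_mulVec, dotProduct_neg, add_mulVec, dotProduct_add, neg_nonpos]
  exact add_nonneg (dotProduct_transpose_mul_self_mulVec_nonneg A x)
    (dotProduct_transpose_mul_self_mulVec_nonneg B x)

variable [CommRing R]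

theorem IsSymm.transpose_mul_mul_add_mul_mul [Fintype k] [Fintype n] {Q T : Matrix n n R}
    {L : Matrix k n R} (hQ : Q.IsSymm) (hT : Tᵀ + T = -(Lᵀ * L)) :
    (T * Q)ᵀ * Q + Q * (T * Q) = -((L * Q)ᵀ * (L * Q)) := by
  calc (T * Q)ᵀ * Q + Q * (T * Q) = Q * (Tᵀ + T) * Q := by
        rw [transpose_mul, hQ.eq]; noncomm_ring
    _ = -((L * Q)ᵀ * (L * Q)) := by
        rw [hT, transpose_mul, hQ.eq]; simp only [mul_neg, neg_mul, Matrix.mul_assoc]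

theorem transpose_add_fromBlocks_zero [Fintype k] [Fintype l] [Fintype n₁] [Fintype n₂]
    {T₁ : Matrix n₁ n₁ R} {T₂ : Matrix n₂ n₂ R} {L₁ : Matrix k n₁ R} {L₂ : Matrix l n₂ R}
    (h₁ : T₁ᵀ + T₁ = -(L₁ᵀ * L₁)) (h₂ : T₂ᵀ + T₂ = -(L₂ᵀ * L₂)) :
    (fromBlocks T₁ 0 0 T₂)ᵀ + fromBlocks T₁ 0 0 T₂ =
      -((fromBlocks L₁ 0 0 L₂)ᵀ * fromBlocks L₁ 0 0 L₂) := by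
  simp [fromBlocks_transpose, fromBlocks_multiply, fromBlocks_add, fromBlocks_neg, h₁, h₂]

theorem transpose_mul_nonsing_inv_add_self [Fintype k] [Fintype n] [DecidableEq n]
    {A P : Matrix n n R} {L : Matrix k n R} (hP : Pᵀ = P) (hA : A * P⁻¹ + P⁻¹ * Aᵀ = -(Lᵀ * L)) :
    (A * P⁻¹)ᵀ + A * P⁻¹ = -(Lᵀ * L) := by
  rw [transpose_mul, transpose_nonsing_inv, hP, add_comm, hA]

variable [Fintype m]

/-- The state matrix `Ă` of the positive feedback interconnection `u₁ = y₂`, `u₂ = y₁`. -/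
def feedbackStateMatrix (A₁ : Matrix n₁ n₁ R) (B₁ : Matrix n₁ m R) (C₁ : Matrix m n₁ R)
    (D₁ : Matrix m m R) (A₂ : Matrix n₂ n₂ R) (B₂ : Matrix n₂ m R) (C₂ : Matrix m n₂ R)
    (D₂ : Matrix m m R) : Matrix (n₁ ⊕ n₂) (n₁ ⊕ n₂) R :=
  fromBlocks (A₁ + B₁ * D₂ * C₁) (B₁ * C₂) (B₂ * C₁) (A₂ + B₂ * D₁ * C₂)

/-- The matrix `Q` of the storage function `x₁ᵀP₁x₁ + x₂ᵀP₂x₂ - 2 y₁ᵀy₂`. -/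
def feedbackStorageMatrix (P₁ : Matrix n₁ n₁ R) (C₁ : Matrix m n₁ R) (D₁ : Matrix m m R)
    (P₂ : Matrix n₂ n₂ R) (C₂ : Matrix m n₂ R) (D₂ : Matrix m m R) :
    Matrix (n₁ ⊕ n₂) (n₁ ⊕ n₂) R :=
  fromBlocks (P₁ - C₁ᵀ * D₂ * C₁) (-(C₁ᵀ * C₂)) (-(C₂ᵀ * C₁)) (P₂ - C₂ᵀ * D₁ * C₂)

variable {A₁ P₁ : Matrix n₁ n₁ R} {B₁ : Matrix n₁ m R} {C₁ : Matrix m n₁ R} {D₁ D₂ : Matrix m m R}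
  {A₂ P₂ : Matrix n₂ n₂ R} {B₂ : Matrix n₂ m R} {C₂ : Matrix m n₂ R}

theorem isSymm_feedbackStorageMatrix (hP₁ : P₁ᵀ = P₁) (hP₂ : P₂ᵀ = P₂) (hD₁ : D₁ᵀ = D₁)
    (hD₂ : D₂ᵀ = D₂) : (feedbackStorageMatrix P₁ C₁ D₁ P₂ C₂ D₂).IsSymm := by
  refine IsSymm.fromBlocks ?_ ?_ ?_ <;>
    simp [IsSymm, transpose_sub, transpose_mul, hP₁, hP₂, hD₁, hD₂, Matrix.mul_assoc]

variable [Fintype n₁] [Fintype n₂]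

theorem fromBlocks_mul_feedbackStorageMatrix [Fintype k] [Fintype l] (L₁ : Matrix k n₁ R)
    (L₂ : Matrix l n₂ R) :
    fromBlocks L₁ 0 0 L₂ * feedbackStorageMatrix P₁ C₁ D₁ P₂ C₂ D₂ =
      fromRows (fromCols (L₁ * (P₁ - C₁ᵀ * D₂ * C₁)) (-(L₁ * C₁ᵀ * C₂)))
        (fromCols (-(L₂ * C₂ᵀ * C₁)) (L₂ * (P₂ - C₂ᵀ * D₁ * C₂))) := by
  simp only [feedbackStorageMatrix, fromBlocks_multiply, Matrix.zero_mul, Matrix.mul_neg, neg_zero,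
    add_zero, zero_add, Matrix.mul_assoc, fromRows_fromCols_eq_fromBlocks]

variable [DecidableEq n₁] [DecidableEq n₂]

theorem feedbackStateMatrix_eq_fromBlocks_mul (hP₁ : IsUnit P₁) (hP₂ : IsUnit P₂)
    (hB₁ : B₁ + A₁ * P₁⁻¹ * C₁ᵀ = 0) (hB₂ : B₂ + A₂ * P₂⁻¹ * C₂ᵀ = 0) :
    feedbackStateMatrix A₁ B₁ C₁ D₁ A₂ B₂ C₂ D₂ =
      fromBlocks (A₁ * P₁⁻¹) 0 0 (A₂ * P₂⁻¹) * feedbackStorageMatrix P₁ C₁ D₁ P₂ C₂ D₂ := by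
  have hA₁ : A₁ * P₁⁻¹ * P₁ = A₁ := by
    rw [Matrix.mul_assoc, nonsing_inv_mul _ ((isUnit_iff_isUnit_det _).1 hP₁), Matrix.mul_one]
  have hA₂ : A₂ * P₂⁻¹ * P₂ = A₂ := by
    rw [Matrix.mul_assoc, nonsing_inv_mul _ ((isUnit_iff_isUnit_det _).1 hP₂), Matrix.mul_one]
  rw [eq_neg_of_add_eq_zero_left hB₁, eq_neg_of_add_eq_zero_left hB₂]
  simp only [feedbackStateMatrix, feedbackStorageMatrix, fromBlocks_multiply, Matrix.zero_mul,
    sub_eq_add_neg, Matrix.mul_add, Matrix.mul_neg, Matrix.neg_mul, ← Matrix.mul_assoc, hA₁, hA₂,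
    neg_zero, add_zero, zero_add]

theorem transpose_feedbackStateMatrix_mul_add [Fintype k] [Fintype l] {L₁ : Matrix k n₁ R}
    {L₂ : Matrix l n₂ R} (hD₁ : D₁ᵀ = D₁) (hD₂ : D₂ᵀ = D₂) (hP₁ : P₁ᵀ = P₁) (hP₂ : P₂ᵀ = P₂)
    (hP₁u : IsUnit P₁) (hP₂u : IsUnit P₂) (hA₁ : A₁ * P₁⁻¹ + P₁⁻¹ * A₁ᵀ = -(L₁ᵀ * L₁))
    (hB₁ : B₁ + A₁ * P₁⁻¹ * C₁ᵀ = 0) (hA₂ : A₂ * P₂⁻¹ + P₂⁻¹ * A₂ᵀ = -(L₂ᵀ * L₂))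
    (hB₂ : B₂ + A₂ * P₂⁻¹ * C₂ᵀ = 0) :
    (feedbackStateMatrix A₁ B₁ C₁ D₁ A₂ B₂ C₂ D₂)ᵀ * feedbackStorageMatrix P₁ C₁ D₁ P₂ C₂ D₂ +
        feedbackStorageMatrix P₁ C₁ D₁ P₂ C₂ D₂ * feedbackStateMatrix A₁ B₁ C₁ D₁ A₂ B₂ C₂ D₂ =
      -((fromCols (L₁ * (P₁ - C₁ᵀ * D₂ * C₁)) (-(L₁ * C₁ᵀ * C₂)))ᵀ *
          fromCols (L₁ * (P₁ - C₁ᵀ * D₂ * C₁)) (-(L₁ * C₁ᵀ * C₂)) +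
        (fromCols (-(L₂ * C₂ᵀ * C₁)) (L₂ * (P₂ - C₂ᵀ * D₁ * C₂)))ᵀ *
          fromCols (-(L₂ * C₂ᵀ * C₁)) (L₂ * (P₂ - C₂ᵀ * D₁ * C₂))) := by
  rw [feedbackStateMatrix_eq_fromBlocks_mul hP₁u hP₂u hB₁ hB₂,
    (isSymm_feedbackStorageMatrix hP₁ hP₂ hD₁ hD₂).transpose_mul_mul_add_mul_mul
      (transpose_add_fromBlocks_zero (transpose_mul_nonsing_inv_add_self hP₁ hA₁)
        (transpose_mul_nonsing_inv_add_self hP₂ hA₂)),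
    fromBlocks_mul_feedbackStorageMatrix, transpose_fromRows, fromCols_mul_fromRows]

end Matrix

theorem stmt_4_general {n1 n2 m l1 l2 : ℕ}
    (A1 : Matrix (Fin n1) (Fin n1) ℝ) (B1 : Matrix (Fin n1) (Fin m) ℝ)
    (C1 : Matrix (Fin m) (Fin n1) ℝ) (D1 : Matrix (Fin m) (Fin m) ℝ)
    (A2 : Matrix (Fin n2) (Fin n2) ℝ) (B2 : Matrix (Fin n2) (Fin m) ℝ)
    (C2 : Matrix (Fin m) (Fin n2) ℝ) (D2 : Matrix (Fin m) (Fin m) ℝ)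
    (P1 : Matrix (Fin n1) (Fin n1) ℝ) (P2 : Matrix (Fin n2) (Fin n2) ℝ)
    (L1 : Matrix (Fin l1) (Fin n1) ℝ) (L2 : Matrix (Fin l2) (Fin n2) ℝ)
    (hD1symm : D1ᵀ = D1) (hD2symm : D2ᵀ = D2)
    (hP1symm : P1ᵀ = P1)
    (hP1pd : ∀ x : Fin n1 → ℝ, x ≠ 0 → 0 < x ⬝ᵥ P1.mulVec x)
    (hP2symm : P2ᵀ = P2)
    (hP2pd : ∀ x : Fin n2 → ℝ, x ≠ 0 → 0 < x ⬝ᵥ P2.mulVec x)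
    (h1a : A1 * P1⁻¹ + P1⁻¹ * A1ᵀ = -(L1ᵀ * L1))
    (h1b : B1 + A1 * P1⁻¹ * C1ᵀ = 0)
    (h2a : A2 * P2⁻¹ + P2⁻¹ * A2ᵀ = -(L2ᵀ * L2))
    (h2b : B2 + A2 * P2⁻¹ * C2ᵀ = 0) :
    ((Matrix.fromBlocks (A1 + B1 * D2 * C1) (B1 * C2)
        (B2 * C1) (A2 + B2 * D1 * C2))ᵀ *
      (Matrix.fromBlocks (P1 - C1ᵀ * D2 * C1) (-(C1ᵀ * C2))
        (-(C2ᵀ * C1)) (P2 - C2ᵀ * D1 * C2)) +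
      (Matrix.fromBlocks (P1 - C1ᵀ * D2 * C1) (-(C1ᵀ * C2))
        (-(C2ᵀ * C1)) (P2 - C2ᵀ * D1 * C2)) *
      (Matrix.fromBlocks (A1 + B1 * D2 * C1) (B1 * C2)
        (B2 * C1) (A2 + B2 * D1 * C2)) =
      -((Matrix.fromCols (L1 * (P1 - C1ᵀ * D2 * C1)) (-(L1 * C1ᵀ * C2)))ᵀ *
          (Matrix.fromCols (L1 * (P1 - C1ᵀ * D2 * C1)) (-(L1 * C1ᵀ * C2))) +
        (Matrix.fromCols (-(L2 * C2ᵀ * C1)) (L2 * (P2 - C2ᵀ * D1 * C2)))ᵀ *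
          (Matrix.fromCols (-(L2 * C2ᵀ * C1)) (L2 * (P2 - C2ᵀ * D1 * C2))))) ∧
    (∀ x : (Fin n1 ⊕ Fin n2) → ℝ,
      x ⬝ᵥ ((Matrix.fromBlocks (A1 + B1 * D2 * C1) (B1 * C2)
          (B2 * C1) (A2 + B2 * D1 * C2))ᵀ *
        (Matrix.fromBlocks (P1 - C1ᵀ * D2 * C1) (-(C1ᵀ * C2))
          (-(C2ᵀ * C1)) (P2 - C2ᵀ * D1 * C2)) +
        (Matrix.fromBlocks (P1 - C1ᵀ * D2 * C1) (-(C1ᵀ * C2))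
          (-(C2ᵀ * C1)) (P2 - C2ᵀ * D1 * C2)) *
        (Matrix.fromBlocks (A1 + B1 * D2 * C1) (B1 * C2)
          (B2 * C1) (A2 + B2 * D1 * C2))).mulVec x ≤ 0) := by
  have lyapunov := transpose_feedbackStateMatrix_mul_add hD1symm hD2symm hP1symm hP2symm
    (isUnit_of_dotProduct_mulVec_pos hP1pd) (isUnit_of_dotProduct_mulVec_pos hP2pd) h1a h1b h2a h2b
  exact ⟨lyapunov, dotProduct_mulVec_nonpos_of_eq_neg_add lyapunov⟩

theorem stmt_4 {n1 n2 m l1 l2 : ℕ}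
    (A1 : Matrix (Fin n1) (Fin n1) ℝ) (B1 : Matrix (Fin n1) (Fin m) ℝ)
    (C1 : Matrix (Fin m) (Fin n1) ℝ) (D1 : Matrix (Fin m) (Fin m) ℝ)
    (A2 : Matrix (Fin n2) (Fin n2) ℝ) (B2 : Matrix (Fin n2) (Fin m) ℝ)
    (C2 : Matrix (Fin m) (Fin n2) ℝ) (D2 : Matrix (Fin m) (Fin m) ℝ)
    (P1 : Matrix (Fin n1) (Fin n1) ℝ) (P2 : Matrix (Fin n2) (Fin n2) ℝ)
    (L1 : Matrix (Fin l1) (Fin n1) ℝ) (L2 : Matrix (Fin l2) (Fin n2) ℝ)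
    (hD1symm : D1ᵀ = D1) (hD2symm : D2ᵀ = D2) (hD12 : D1 * D2 = 0)
    (hP1symm : P1ᵀ = P1)
    (hP1pd : ∀ x : Fin n1 → ℝ, x ≠ 0 → 0 < x ⬝ᵥ P1.mulVec x)
    (hP2symm : P2ᵀ = P2)
    (hP2pd : ∀ x : Fin n2 → ℝ, x ≠ 0 → 0 < x ⬝ᵥ P2.mulVec x)
    (h1a : A1 * P1⁻¹ + P1⁻¹ * A1ᵀ = -(L1ᵀ * L1))
    (h1b : B1 + A1 * P1⁻¹ * C1ᵀ = 0)
    (h2a : A2 * P2⁻¹ + P2⁻¹ * A2ᵀ = -(L2ᵀ * L2))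
    (h2b : B2 + A2 * P2⁻¹ * C2ᵀ = 0) :
    ((Matrix.fromBlocks (A1 + B1 * D2 * C1) (B1 * C2)
        (B2 * C1) (A2 + B2 * D1 * C2))ᵀ *
      (Matrix.fromBlocks (P1 - C1ᵀ * D2 * C1) (-(C1ᵀ * C2))
        (-(C2ᵀ * C1)) (P2 - C2ᵀ * D1 * C2)) +
      (Matrix.fromBlocks (P1 - C1ᵀ * D2 * C1) (-(C1ᵀ * C2))
        (-(C2ᵀ * C1)) (P2 - C2ᵀ * D1 * C2)) *
      (Matrix.fromBlocks (A1 + B1 * D2 * C1) (B1 * C2)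
        (B2 * C1) (A2 + B2 * D1 * C2)) =
      -((Matrix.fromCols (L1 * (P1 - C1ᵀ * D2 * C1)) (-(L1 * C1ᵀ * C2)))ᵀ *
          (Matrix.fromCols (L1 * (P1 - C1ᵀ * D2 * C1)) (-(L1 * C1ᵀ * C2))) +
        (Matrix.fromCols (-(L2 * C2ᵀ * C1)) (L2 * (P2 - C2ᵀ * D1 * C2)))ᵀ *
          (Matrix.fromCols (-(L2 * C2ᵀ * C1)) (L2 * (P2 - C2ᵀ * D1 * C2))))) ∧
    (∀ x : (Fin n1 ⊕ Fin n2) → ℝ,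
      x ⬝ᵥ ((Matrix.fromBlocks (A1 + B1 * D2 * C1) (B1 * C2)
          (B2 * C1) (A2 + B2 * D1 * C2))ᵀ *
        (Matrix.fromBlocks (P1 - C1ᵀ * D2 * C1) (-(C1ᵀ * C2))
          (-(C2ᵀ * C1)) (P2 - C2ᵀ * D1 * C2)) +
        (Matrix.fromBlocks (P1 - C1ᵀ * D2 * C1) (-(C1ᵀ * C2))
          (-(C2ᵀ * C1)) (P2 - C2ᵀ * D1 * C2)) *
        (Matrix.fromBlocks (A1 + B1 * D2 * C1) (B1 * C2)
          (B2 * C1) (A2 + B2 * D1 * C2))).mulVec x ≤ 0) :=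
  stmt_4_general A1 B1 C1 D1 A2 B2 C2 D2 P1 P2 L1 L2 hD1symm hD2symm hP1symm hP1pd hP2symm hP2pd h1a
    h1b h2a h2b
end

section
/- Let A1 ∈ ℝ^{n1×n1}, B1 ∈ ℝ^{n1×m}, C1 ∈ ℝ^{m×n1}, D1 ∈ ℝ^{m×m} and A2 ∈ ℝ^{n2×n2}, B2 ∈ ℝ^{n2×m}, C2 ∈ ℝ^{m×n2}, D2 ∈ ℝ^{m×m} with D1, D2 symmetric and D1 D2 = 0. Suppose P1, P2 are symmetric positive definite and L1, L2 are real matrices such that A1 P1^{-1} + P1^{-1} A1^T = -L1^T L1, B1 + A1 P1^{-1} C1^T = 0, A2 P2^{-1} + P2^{-1} A2^T = -L2^T L2, and B2 + A2 P2^{-1} C2^T = 0. Assume in addition that: (i) the block matrix Q = [[P1 - C1^T D2 C1, -C1^T C2], [-C2^T C1, P2 - C2^T D1 C2]] is positive definite; (ii) for every nonzero real ω, the complex matrix [[A2 - iω I, B2], [L2 P2, -L2 C2^T]] has trivial kernel (full column rank); and (iii) for every nonzero real ω and every x ∈ ℂ^{n1}, A1 x = iω x together with C1 x = 0 implies x =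 0. Then for every nonzero real ω, iω is not an eigenvalue of the closed-loop matrix Ă = [[A1 + B1 D2 C1, B1 C2], [B2 C1, A2 + B2 D1 C2]]. -/
open Matrix Complex

set_option linter.unusedSectionVars false
set_option maxHeartbeats 1000000

namespace Stmt7Aux

theorem herm {n m : Type*} [Fintype n] [Fintype m] (M : Matrix m n ℂ) (a : n → ℂ) (b : m → ℂ) :
    star (M *ᵥ a) ⬝ᵥ b = star a ⬝ᵥ (Mᴴ *ᵥ b) := by
  rw [star_mulVec, dotProduct_mulVec]

theorem energyC {n m l : Type*} [Fintype n] [Fintype m] [Fintype l]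
    (A : Matrix n n ℂ) (B : Matrix n m ℂ) (C : Matrix m n ℂ)
    (P : Matrix n n ℂ) (L : Matrix l n ℂ)
    (hP : Pᴴ = P)
    (h1 : P*A + Aᴴ*P = -(P * Lᴴ * (L * P)))
    (h2 : P*B = Aᴴ*Cᴴ + P*Lᴴ*(L*Cᴴ))
    (h3 : Bᴴ*Cᴴ + C*B = C*Lᴴ*(L*Cᴴ))
    (μ : ℂ) (hμ : star μ = -μ)
    (x : n → ℂ) (u : m → ℂ)
    (hdyn : A *ᵥ x + B *ᵥ u = μ • x) :
    star ((L*P) *ᵥ x - (L*Cᴴ) *ᵥ u) ⬝ᵥ ((L*P) *ᵥ x - (L*Cᴴ) *ᵥ u)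
      = μ * (star u ⬝ᵥ (C *ᵥ x)) - μ * (star (C *ᵥ x) ⬝ᵥ u) := by
  have hAx : A *ᵥ x = μ • x - B *ᵥ u := by
    rw [← hdyn]; abel
  have hT : star x ⬝ᵥ (P *ᵥ (A *ᵥ x + B *ᵥ u)) + star (A *ᵥ x + B *ᵥ u) ⬝ᵥ (P *ᵥ x) = 0 := by
    rw [hdyn]
    simp [mulVec_smul, dotProduct_smul, star_smul, smul_dotProduct, hμ, smul_eq_mul]
  have e1 : star x ⬝ᵥ (P *ᵥ (A *ᵥ x + B *ᵥ u))
      = star x ⬝ᵥ ((P*A) *ᵥ x) + star x ⬝ᵥ ((P*B) *ᵥ u) := by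
    simp [mulVec_add, dotProduct_add]
  have e2 : star (A *ᵥ x + B *ᵥ u) ⬝ᵥ (P *ᵥ x)
      = star x ⬝ᵥ ((Aᴴ*P) *ᵥ x) + star u ⬝ᵥ ((Bᴴ*P) *ᵥ x) := by
    rw [star_add, add_dotProduct, herm, herm, mulVec_mulVec, mulVec_mulVec]
  have e3 : star x ⬝ᵥ ((P*A) *ᵥ x) + star x ⬝ᵥ ((Aᴴ*P) *ᵥ x)
      = -(star x ⬝ᵥ ((P*Lᴴ*(L*P)) *ᵥ x)) := by
    rw [← dotProduct_add, ← add_mulVec, h1, neg_mulVec, dotProduct_neg]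
  have e4 : star x ⬝ᵥ ((P*B) *ᵥ u)
      = star x ⬝ᵥ ((Aᴴ*Cᴴ) *ᵥ u) + star x ⬝ᵥ ((P*Lᴴ*(L*Cᴴ)) *ᵥ u) := by
    rw [h2, add_mulVec, dotProduct_add]
  have hBP : Bᴴ*P = C*A + C*Lᴴ*(L*P) := by
    have := congrArg conjTranspose h2
    simpa [conjTranspose_mul, hP, Matrix.mul_assoc] using this
  have e5 : star u ⬝ᵥ ((Bᴴ*P) *ᵥ x)
      = star u ⬝ᵥ ((C*A) *ᵥ x) + star u ⬝ᵥ ((C*Lᴴ*(L*P)) *ᵥ x) := by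
    rw [hBP, add_mulVec, dotProduct_add]
  have e6 : star x ⬝ᵥ ((Aᴴ*Cᴴ) *ᵥ u)
      = -μ * (star (C *ᵥ x) ⬝ᵥ u) - star u ⬝ᵥ ((Bᴴ*Cᴴ) *ᵥ u) := by
    rw [← mulVec_mulVec, ← herm, hAx]
    rw [star_sub, sub_dotProduct, star_smul, hμ, smul_dotProduct, herm (M := B), mulVec_mulVec]
    rw [herm (M := C)]
    simp [smul_eq_mul]
  have e7 : star u ⬝ᵥ ((C*A) *ᵥ x)
      = μ * (star u ⬝ᵥ (C *ᵥ x)) - star u ⬝ᵥ ((C*B) *ᵥ u) := by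
    rw [← mulVec_mulVec, hAx, mulVec_sub, mulVec_smul, dotProduct_sub, dotProduct_smul,
      mulVec_mulVec, smul_eq_mul]
  have e8 : star u ⬝ᵥ ((Bᴴ*Cᴴ) *ᵥ u) + star u ⬝ᵥ ((C*B) *ᵥ u)
      = star u ⬝ᵥ ((C*Lᴴ*(L*Cᴴ)) *ᵥ u) := by
    rw [← dotProduct_add, ← add_mulVec, h3]
  have e9 : star ((L*P) *ᵥ x - (L*Cᴴ) *ᵥ u) ⬝ᵥ ((L*P) *ᵥ x - (L*Cᴴ) *ᵥ u)
      = star x ⬝ᵥ ((P*Lᴴ*(L*P)) *ᵥ x) - star x ⬝ᵥ ((P*Lᴴ*(L*Cᴴ)) *ᵥ u)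
        - star u ⬝ᵥ ((C*Lᴴ*(L*P)) *ᵥ x) + star u ⬝ᵥ ((C*Lᴴ*(L*Cᴴ)) *ᵥ u) := by
    have hLP : (L*P)ᴴ = P*Lᴴ := by rw [conjTranspose_mul, hP]
    have hLC : (L*Cᴴ)ᴴ = C*Lᴴ := by rw [conjTranspose_mul, conjTranspose_conjTranspose]
    rw [star_sub, sub_dotProduct, dotProduct_sub, dotProduct_sub,
      herm, herm, herm, herm, hLP, hLC, mulVec_mulVec, mulVec_mulVec, mulVec_mulVec, mulVec_mulVec]
    ring
  linear_combination e9 - hT + e1 + e2 + e3 + e4 + e5 + e6 + e7 - e8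

theorem cmap_mul {a b c : Type*} [Fintype b] (M : Matrix a b ℝ) (N : Matrix b c ℝ) :
    (M * N).map (Complex.ofReal) = M.map Complex.ofReal * N.map Complex.ofReal := by
  ext i j
  simp [Matrix.map_apply, Matrix.mul_apply]

theorem cmap_ct {a b : Type*} (M : Matrix a b ℝ) :
    (M.map Complex.ofReal)ᴴ = Mᵀ.map Complex.ofReal := by
  ext i j
  simp [Matrix.map_apply, Matrix.conjTranspose_apply]

theorem cmap_add {a b : Type*} (M N : Matrix a b ℝ) :
    (M + N).map (Complex.ofReal) = M.map Complex.ofReal + N.map Complex.ofReal := by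
  ext i j; simp

theorem cmap_neg {a b : Type*} (M : Matrix a b ℝ) :
    (-M).map (Complex.ofReal) = -(M.map Complex.ofReal) := by
  ext i j; simp

theorem cmap_zero {a b : Type*} :
    ((0 : Matrix a b ℝ)).map (Complex.ofReal) = 0 := by
  ext i j; simp

theorem cancel_left {n k : Type*} [Fintype n] [DecidableEq n] {P Q : Matrix n n ℝ}
    (h : P * Q = 1) (X : Matrix n k ℝ) : P * (Q * X) = X := by
  rw [← Matrix.mul_assoc, h, Matrix.one_mul]

theorem pd_isUnit {n : Type*} [Fintype n] [DecidableEq n] (P : Matrix n n ℝ)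
    (h : ∀ x, x ≠ 0 → 0 < x ⬝ᵥ P *ᵥ x) : IsUnit P.det := by
  rw [isUnit_iff_ne_zero]
  intro hc
  obtain ⟨v, hv, hv0⟩ := Matrix.exists_mulVec_eq_zero_iff.mpr hc
  have h2 := h v hv
  rw [hv0] at h2
  simp at h2

theorem realSide {n m l : Type*} [Fintype n] [DecidableEq n] [Fintype m] [Fintype l]
    (A : Matrix n n ℝ) (B : Matrix n m ℝ) (C : Matrix m n ℝ)
    (P : Matrix n n ℝ) (L : Matrix l n ℝ)
    (hPsymm : Pᵀ = P) (hdet : IsUnit P.det)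
    (ha : A * P⁻¹ + P⁻¹ * Aᵀ = -(Lᵀ * L))
    (hb : B + A * P⁻¹ * Cᵀ = 0) :
    P*A + Aᵀ*P = -(P * Lᵀ * (L * P)) ∧
    P*B = Aᵀ*Cᵀ + P*Lᵀ*(L*Cᵀ) ∧
    Bᵀ*Cᵀ + C*B = C*Lᵀ*(L*Cᵀ) := by
  have hPP : P * P⁻¹ = 1 := Matrix.mul_nonsing_inv P hdet
  have hPP' : P⁻¹ * P = 1 := Matrix.nonsing_inv_mul P hdet
  have hinvsymm : (P⁻¹)ᵀ = P⁻¹ := by rw [Matrix.transpose_nonsing_inv, hPsymm]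
  have hB : B = -(A * P⁻¹ * Cᵀ) := eq_neg_of_add_eq_zero_left hb
  have H1 : P*A + Aᵀ*P = -(P * Lᵀ * (L * P)) := by
    have h := congrArg (fun M => P * M * P) ha
    simp only [Matrix.add_mul, Matrix.mul_add, Matrix.neg_mul, Matrix.mul_neg,
      Matrix.mul_assoc, hPP', Matrix.mul_one, cancel_left hPP] at h
    simpa only [Matrix.mul_assoc] using h
  have H2 : P*B = Aᵀ*Cᵀ + P*Lᵀ*(L*Cᵀ) := by
    have hPA : P * A = -(P * Lᵀ * (L * P)) - Aᵀ*P := eq_sub_of_add_eq H1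
    rw [hB, show P * -(A * P⁻¹ * Cᵀ) = -((P * A) * (P⁻¹ * Cᵀ)) by
      simp only [Matrix.mul_neg, Matrix.mul_assoc], hPA]
    simp only [Matrix.sub_mul, Matrix.neg_mul, Matrix.mul_assoc, cancel_left hPP]
    abel
  have hBt : Bᵀ = -(C * (P⁻¹ * Aᵀ)) := by
    rw [hB, Matrix.transpose_neg]
    simp only [Matrix.transpose_mul, Matrix.transpose_transpose, hinvsymm, Matrix.mul_assoc]
  have H3 : Bᵀ*Cᵀ + C*B = C*Lᵀ*(L*Cᵀ) := by
    have hX := congrArg (fun M => C * M * Cᵀ) ha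
    simp only [Matrix.add_mul, Matrix.mul_add, Matrix.neg_mul, Matrix.mul_neg,
      Matrix.mul_assoc] at hX
    have hg : -(C * (A * (P⁻¹ * Cᵀ)) + C * (P⁻¹ * (Aᵀ * Cᵀ))) = C*(Lᵀ*(L*Cᵀ)) := by
      rw [hX, neg_neg]
    rw [hBt, hB]
    simp only [Matrix.neg_mul, Matrix.mul_neg, Matrix.mul_assoc]
    rw [← hg]
    abel
  exact ⟨H1, H2, H3⟩

end Stmt7Aux

open scoped ComplexOrder

theorem stmt_7 {n1 n2 m l1 l2 : ℕ}
    (A1 : Matrix (Fin n1) (Fin n1) ℝ) (B1 : Matrix (Fin n1) (Fin m) ℝ)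
    (C1 : Matrix (Fin m) (Fin n1) ℝ) (D1 : Matrix (Fin m) (Fin m) ℝ)
    (A2 : Matrix (Fin n2) (Fin n2) ℝ) (B2 : Matrix (Fin n2) (Fin m) ℝ)
    (C2 : Matrix (Fin m) (Fin n2) ℝ) (D2 : Matrix (Fin m) (Fin m) ℝ)
    (P1 : Matrix (Fin n1) (Fin n1) ℝ) (P2 : Matrix (Fin n2) (Fin n2) ℝ)
    (L1 : Matrix (Fin l1) (Fin n1) ℝ) (L2 : Matrix (Fin l2) (Fin n2) ℝ)
    (hD1symm : D1ᵀ = D1) (hD2symm : D2ᵀ = D2) (hD12 : D1 * D2 = 0)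
    (hP1symm : P1ᵀ = P1)
    (hP1pd : ∀ x : Fin n1 → ℝ, x ≠ 0 → 0 < x ⬝ᵥ P1.mulVec x)
    (hP2symm : P2ᵀ = P2)
    (hP2pd : ∀ x : Fin n2 → ℝ, x ≠ 0 → 0 < x ⬝ᵥ P2.mulVec x)
    (h1a : A1 * P1⁻¹ + P1⁻¹ * A1ᵀ = -(L1ᵀ * L1))
    (h1b : B1 + A1 * P1⁻¹ * C1ᵀ = 0)
    (h2a : A2 * P2⁻¹ + P2⁻¹ * A2ᵀ = -(L2ᵀ * L2))
    (h2b : B2 + A2 * P2⁻¹ * C2ᵀ = 0)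
    (hQpd : ∀ x : (Fin n1 ⊕ Fin n2) → ℝ, x ≠ 0 →
      0 < x ⬝ᵥ (Matrix.fromBlocks
          (P1 - C1ᵀ * D2 * C1) (-(C1ᵀ * C2))
          (-(C2ᵀ * C1)) (P2 - C2ᵀ * D1 * C2)).mulVec x)
    (hrank : ∀ ω : ℝ, ω ≠ 0 → ∀ v : (Fin n2 ⊕ Fin m) → ℂ,
      (Matrix.fromBlocks
          (A2.map Complex.ofReal - (Complex.I * (ω : ℂ)) • (1 : Matrix (Fin n2) (Fin n2) ℂ))
          (B2.map Complex.ofReal)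
          ((L2 * P2).map Complex.ofReal)
          (-((L2 * C2ᵀ).map Complex.ofReal))).mulVec v = 0 → v = 0)
    (hobs : ∀ ω : ℝ, ω ≠ 0 → ∀ x : Fin n1 → ℂ,
      (A1.map Complex.ofReal).mulVec x = (Complex.I * (ω : ℂ)) • x →
      (C1.map Complex.ofReal).mulVec x = 0 → x = 0) :
    ∀ ω : ℝ, ω ≠ 0 →
      (Complex.I * (ω : ℂ)) ∉ spectrum ℂ
        ((Matrix.fromBlocks (A1 + B1 * D2 * C1) (B1 * C2)
            (B2 * C1) (A2 + B2 * D1 * C2)).map Complex.ofReal) := by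
  intro ω hω hmem
  -- notation
  set μ : ℂ := Complex.I * (ω : ℂ) with hμdef
  have hμstar : star μ = -μ := by
    rw [hμdef, star_mul', Complex.star_def, Complex.conj_I, Complex.conj_ofReal]
    ring
  have hD21 : D2 * D1 = 0 := by
    rw [← hD1symm, ← hD2symm, ← Matrix.transpose_mul, hD12, Matrix.transpose_zero]
  -- eigenvector from spectrum membership
  rw [spectrum.mem_iff] at hmem
  have hdet0 : (μ • (1 : Matrix (Fin n1 ⊕ Fin n2) (Fin n1 ⊕ Fin n2) ℂ) -
      (Matrix.fromBlocks (A1 + B1 * D2 * C1) (B1 * C2)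
        (B2 * C1) (A2 + B2 * D1 * C2)).map Complex.ofReal).det = 0 := by
    by_contra h
    exact hmem (by
      rw [Algebra.algebraMap_eq_smul_one]
      exact (Matrix.isUnit_iff_isUnit_det _).2 (isUnit_iff_ne_zero.2 h))
  obtain ⟨v, hv, hv0⟩ := Matrix.exists_mulVec_eq_zero_iff.2 hdet0
  have heig : (Matrix.fromBlocks (A1 + B1 * D2 * C1) (B1 * C2)
      (B2 * C1) (A2 + B2 * D1 * C2)).map Complex.ofReal *ᵥ v = μ • v := by
    rw [Matrix.sub_mulVec, sub_eq_zero] at hv0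
    rw [← hv0, Matrix.smul_mulVec, Matrix.one_mulVec]
  set x1 : Fin n1 → ℂ := fun i => v (Sum.inl i) with hx1def
  set x2 : Fin n2 → ℂ := fun i => v (Sum.inr i) with hx2def
  have hvelim : v = Sum.elim x1 x2 := by funext i; cases i <;> rfl
  rw [hvelim, Matrix.fromBlocks_map, Matrix.fromBlocks_mulVec] at heig
  have e1 : (A1 + B1 * D2 * C1).map Complex.ofReal *ᵥ x1
      + (B1 * C2).map Complex.ofReal *ᵥ x2 = μ • x1 := by
    funext i
    have := congrFun heig (Sum.inl i)
    simpa using this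
  have e2 : (B2 * C1).map Complex.ofReal *ᵥ x1
      + (A2 + B2 * D1 * C2).map Complex.ofReal *ᵥ x2 = μ • x2 := by
    funext i
    have := congrFun heig (Sum.inr i)
    simpa using this
  -- inputs and outputs
  set y1 : Fin m → ℂ := C1.map Complex.ofReal *ᵥ x1 with hy1def
  set y2 : Fin m → ℂ := C2.map Complex.ofReal *ᵥ x2 with hy2def
  set u1 : Fin m → ℂ := D2.map Complex.ofReal *ᵥ y1 + y2 with hu1def
  set u2 : Fin m → ℂ := y1 + D1.map Complex.ofReal *ᵥ y2 with hu2def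
  -- dynamics
  have hdyn1 : A1.map Complex.ofReal *ᵥ x1 + B1.map Complex.ofReal *ᵥ u1 = μ • x1 := by
    rw [← e1, hu1def, hy1def, hy2def]
    simp only [Stmt7Aux.cmap_mul, Stmt7Aux.cmap_add, Matrix.mulVec_add, Matrix.add_mulVec,
      Matrix.mulVec_mulVec, Matrix.mul_assoc]
    abel
  have hdyn2 : A2.map Complex.ofReal *ᵥ x2 + B2.map Complex.ofReal *ᵥ u2 = μ • x2 := by
    rw [← e2, hu2def, hy1def, hy2def]
    simp only [Stmt7Aux.cmap_mul, Stmt7Aux.cmap_add, Matrix.mulVec_add, Matrix.add_mulVec,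
      Matrix.mulVec_mulVec, Matrix.mul_assoc]
    abel
  -- LMI consequences
  obtain ⟨Ha1, Hb1, Hc1⟩ := Stmt7Aux.realSide A1 B1 C1 P1 L1 hP1symm
    (Stmt7Aux.pd_isUnit P1 hP1pd) h1a h1b
  obtain ⟨Ha2, Hb2, Hc2⟩ := Stmt7Aux.realSide A2 B2 C2 P2 L2 hP2symm
    (Stmt7Aux.pd_isUnit P2 hP2pd) h2a h2b
  -- complexify
  have hP1C : (P1.map Complex.ofReal)ᴴ = P1.map Complex.ofReal := by
    rw [Stmt7Aux.cmap_ct, hP1symm]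
  have hP2C : (P2.map Complex.ofReal)ᴴ = P2.map Complex.ofReal := by
    rw [Stmt7Aux.cmap_ct, hP2symm]
  have HC1a := congrArg (fun M => M.map Complex.ofReal) Ha1
  have HC1b := congrArg (fun M => M.map Complex.ofReal) Hb1
  have HC1c := congrArg (fun M => M.map Complex.ofReal) Hc1
  have HC2a := congrArg (fun M => M.map Complex.ofReal) Ha2
  have HC2b := congrArg (fun M => M.map Complex.ofReal) Hb2
  have HC2c := congrArg (fun M => M.map Complex.ofReal) Hc2
  simp only [Stmt7Aux.cmap_mul, Stmt7Aux.cmap_add, Stmt7Aux.cmap_neg, ← Stmt7Aux.cmap_ct]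
    at HC1a HC1b HC1c HC2a HC2b HC2c
  -- energy identities
  have hw1 := Stmt7Aux.energyC (A1.map Complex.ofReal) (B1.map Complex.ofReal)
    (C1.map Complex.ofReal) (P1.map Complex.ofReal) (L1.map Complex.ofReal)
    hP1C HC1a HC1b HC1c μ hμstar x1 u1 hdyn1
  have hw2 := Stmt7Aux.energyC (A2.map Complex.ofReal) (B2.map Complex.ofReal)
    (C2.map Complex.ofReal) (P2.map Complex.ofReal) (L2.map Complex.ofReal)
    hP2C HC2a HC2b HC2c μ hμstar x2 u2 hdyn2
  set w1 : Fin l1 → ℂ :=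
    (L1.map Complex.ofReal * P1.map Complex.ofReal) *ᵥ x1
      - (L1.map Complex.ofReal * (C1.map Complex.ofReal)ᴴ) *ᵥ u1 with hw1def
  set w2 : Fin l2 → ℂ :=
    (L2.map Complex.ofReal * P2.map Complex.ofReal) *ᵥ x2
      - (L2.map Complex.ofReal * (C2.map Complex.ofReal)ᴴ) *ᵥ u2 with hw2def
  -- the sum of the two energies is zero
  have hsym1 : star (D2.map Complex.ofReal *ᵥ y1) ⬝ᵥ y1
      = star y1 ⬝ᵥ (D2.map Complex.ofReal *ᵥ y1) := by
    rw [Stmt7Aux.herm, Stmt7Aux.cmap_ct, hD2symm]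
  have hsym2 : star (D1.map Complex.ofReal *ᵥ y2) ⬝ᵥ y2
      = star y2 ⬝ᵥ (D1.map Complex.ofReal *ᵥ y2) := by
    rw [Stmt7Aux.herm, Stmt7Aux.cmap_ct, hD1symm]
  have hsum : star w1 ⬝ᵥ w1 + star w2 ⬝ᵥ w2 = 0 := by
    rw [hw1def, hw2def, hw1, hw2, ← hy1def, ← hy2def, hu1def, hu2def]
    simp only [star_add, add_dotProduct, dotProduct_add]
    linear_combination μ * hsym1 + μ * hsym2
  have hn1 : (0 : ℂ) ≤ star w1 ⬝ᵥ w1 := dotProduct_star_self_nonneg w1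
  have hn2 : (0 : ℂ) ≤ star w2 ⬝ᵥ w2 := dotProduct_star_self_nonneg w2
  have hz1 : star w1 ⬝ᵥ w1 = 0 := by
    have h' : star w1 ⬝ᵥ w1 = -(star w2 ⬝ᵥ w2) := by linear_combination hsum
    exact le_antisymm (h' ▸ neg_nonpos_of_nonneg hn2) hn1
  have hz2 : star w2 ⬝ᵥ w2 = 0 := by linear_combination hsum - hz1
  have hwz1 : w1 = 0 := dotProduct_star_self_eq_zero.mp hz1
  have hwz2 : w2 = 0 := dotProduct_star_self_eq_zero.mp hz2
  -- full column rank condition kills (x2, u2)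
  have hkill := hrank ω hω (Sum.elim x2 u2)
  rw [Matrix.fromBlocks_mulVec] at hkill
  have hx2u2 : Sum.elim x2 u2 = 0 := by
    apply hkill
    have hblk1 : (A2.map Complex.ofReal - μ • 1) *ᵥ (Sum.elim x2 u2 ∘ Sum.inl)
        + B2.map Complex.ofReal *ᵥ (Sum.elim x2 u2 ∘ Sum.inr) = 0 := by
      have hc1 : Sum.elim x2 u2 ∘ Sum.inl = x2 := rfl
      have hc2 : Sum.elim x2 u2 ∘ Sum.inr = u2 := rfl
      rw [hc1, hc2, Matrix.sub_mulVec, Matrix.smul_mulVec, Matrix.one_mulVec,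
        sub_add_eq_add_sub, hdyn2, sub_self]
    have hblk2 : (L2 * P2).map Complex.ofReal *ᵥ (Sum.elim x2 u2 ∘ Sum.inl)
        + (-((L2 * C2ᵀ).map Complex.ofReal)) *ᵥ (Sum.elim x2 u2 ∘ Sum.inr) = 0 := by
      have hc1 : Sum.elim x2 u2 ∘ Sum.inl = x2 := rfl
      have hc2 : Sum.elim x2 u2 ∘ Sum.inr = u2 := rfl
      rw [hc1, hc2, Matrix.neg_mulVec, ← sub_eq_add_neg, Stmt7Aux.cmap_mul, Stmt7Aux.cmap_mul,
        ← Stmt7Aux.cmap_ct, ← hw2def, hwz2]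
    funext i
    cases i with
    | inl i => rw [Sum.elim_inl, hblk1]; rfl
    | inr i => rw [Sum.elim_inr, hblk2]; rfl
  have hx2 : x2 = 0 := by funext i; exact congrFun hx2u2 (Sum.inl i)
  have hu2z : u2 = 0 := by funext i; exact congrFun hx2u2 (Sum.inr i)
  -- deduce u1 = 0 using D2 * D1 = 0
  have hy2z : y2 = 0 := by rw [hy2def, hx2, Matrix.mulVec_zero]
  have hD2u2 : D2.map Complex.ofReal *ᵥ u2 = D2.map Complex.ofReal *ᵥ y1 := by
    rw [hu2def]
    simp only [Matrix.mulVec_add, Matrix.mulVec_mulVec, ← Stmt7Aux.cmap_mul, hD21,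
      Stmt7Aux.cmap_zero, Matrix.zero_mulVec, add_zero]
  have hu1z : u1 = 0 := by
    rw [hu1def, ← hD2u2, hu2z, Matrix.mulVec_zero, hy2z, add_zero]
  -- deduce y1 = 0 and A1 x1 = μ x1
  have hy1z : y1 = 0 := by
    have := hu2z
    rw [hu2def, hy2z, Matrix.mulVec_zero, add_zero] at this
    exact this
  have hA1x1 : A1.map Complex.ofReal *ᵥ x1 = μ • x1 := by
    have := hdyn1
    rw [hu1z, Matrix.mulVec_zero, add_zero] at this
    exact this
  have hx1 : x1 = 0 := hobs ω hω x1 hA1x1 (by rw [← hy1def, hy1z])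
  exact hv (by rw [hvelim, hx1, hx2]; funext i; cases i <;> rfl)
end

section
/- Let A1 ∈ ℝ^{n1×n1}, B1 ∈ ℝ^{n1×m}, C1 ∈ ℝ^{m×n1}, D1 ∈ ℝ^{m×m} and A2 ∈ ℝ^{n2×n2}, B2 ∈ ℝ^{n2×m}, C2 ∈ ℝ^{m×n2}, D2 ∈ ℝ^{m×m} with A1 and A2 invertible, D1, D2 symmetric, and D1 D2 = 0. Define G0 = D1 - C1 A1^{-1} B1 and H0 = D2 - C2 A2^{-1} B2. If the matrix I - G0 H0 is invertible, then the closed-loop matrix Ă = [[A1 + B1 D2 C1, B1 C2], [B2 C1, A2 + B2 D1 C2]] is invertible; equivalently, 0 is not an eigenvalue of Ă. -/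
open Matrix

theorem stmt_8 {n1 n2 m : ℕ}
    (A1 : Matrix (Fin n1) (Fin n1) ℝ) (B1 : Matrix (Fin n1) (Fin m) ℝ)
    (C1 : Matrix (Fin m) (Fin n1) ℝ) (D1 : Matrix (Fin m) (Fin m) ℝ)
    (A2 : Matrix (Fin n2) (Fin n2) ℝ) (B2 : Matrix (Fin n2) (Fin m) ℝ)
    (C2 : Matrix (Fin m) (Fin n2) ℝ) (D2 : Matrix (Fin m) (Fin m) ℝ)
    (hA1 : IsUnit A1.det) (hA2 : IsUnit A2.det)
    (hD1symm : D1ᵀ = D1) (hD2symm : D2ᵀ = D2) (hD12 : D1 * D2 = 0)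
    (hDC : IsUnit (1 - (D1 - C1 * A1⁻¹ * B1) * (D2 - C2 * A2⁻¹ * B2)).det) :
    IsUnit (Matrix.fromBlocks (A1 + B1 * D2 * C1) (B1 * C2)
        (B2 * C1) (A2 + B2 * D1 * C2)).det := by
  have hD21 : D2 * D1 = 0 := by
    have := congrArg Matrix.transpose hD12
    simpa [Matrix.transpose_mul, hD1symm, hD2symm] using this
  set X1 := C1 * A1⁻¹ * B1 with hX1
  set X2 := C2 * A2⁻¹ * B2 with hX2
  set S : Matrix (Fin m) (Fin m) ℝ := 1 - (D1 - X1) * (D2 - X2) with hS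
  set Atil := Matrix.fromBlocks (A1 + B1 * D2 * C1) (B1 * C2)
      (B2 * C1) (A2 + B2 * D1 * C2) with hAtil
  set N := Matrix.fromBlocks A1⁻¹ (0 : Matrix (Fin n1) (Fin n2) ℝ)
      (0 : Matrix (Fin n2) (Fin n1) ℝ) A2⁻¹ with hN
  set P := Matrix.fromBlocks (A1⁻¹ * B1) (0 : Matrix (Fin n1) (Fin m) ℝ)
      (0 : Matrix (Fin n2) (Fin m) ℝ) (A2⁻¹ * B2) with hP
  set Q := Matrix.fromBlocks (D2 * C1) C2 C1 (D1 * C2) with hQ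
  set M : Matrix (Fin m ⊕ Fin m) (Fin m ⊕ Fin m) ℝ :=
      Matrix.fromBlocks (1 + D2 * X1) X2 X1 (1 + D1 * X2) with hM
  have hinv1 : A1⁻¹ * A1 = 1 := nonsing_inv_mul A1 hA1
  have hinv2 : A2⁻¹ * A2 = 1 := nonsing_inv_mul A2 hA2
  -- N * Atil = 1 + P * Q
  have key1 : N * Atil = 1 + P * Q := by
    rw [hN, hAtil, hP, hQ, Matrix.fromBlocks_multiply, Matrix.fromBlocks_multiply,
      ← Matrix.fromBlocks_one, Matrix.fromBlocks_add]
    rw [Matrix.fromBlocks_inj]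
    refine ⟨?_, ?_, ?_, ?_⟩ <;>
      simp [Matrix.mul_add, hinv1, hinv2, Matrix.mul_assoc]
  -- 1 + Q * P = M
  have key2 : 1 + Q * P = M := by
    rw [hQ, hP, hM, Matrix.fromBlocks_multiply, ← Matrix.fromBlocks_one,
      Matrix.fromBlocks_add]
    rw [Matrix.fromBlocks_inj]
    refine ⟨?_, ?_, ?_, ?_⟩ <;>
      simp [hX1, hX2, Matrix.mul_assoc]
  -- L * M * R = fromBlocks 1 0 X1 S
  set L : Matrix (Fin m ⊕ Fin m) (Fin m ⊕ Fin m) ℝ :=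
      Matrix.fromBlocks 1 (-D2) 0 1 with hL
  set R : Matrix (Fin m ⊕ Fin m) (Fin m ⊕ Fin m) ℝ :=
      Matrix.fromBlocks 1 (D2 - X2) 0 1 with hR
  have key3 : L * M * R = Matrix.fromBlocks 1 0 X1 S := by
    rw [hL, hM, hR, Matrix.fromBlocks_multiply, Matrix.fromBlocks_multiply,
      Matrix.fromBlocks_inj]
    refine ⟨?_, ?_, ?_, ?_⟩
    · simp [Matrix.mul_add]
    · simp only [Matrix.one_mul, Matrix.mul_one, Matrix.zero_mul, Matrix.mul_zero,
        Matrix.add_mul, Matrix.mul_add, Matrix.neg_mul, Matrix.mul_neg,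
        Matrix.sub_mul, Matrix.mul_sub, ← Matrix.mul_assoc, hD21]
      abel
    · simp
    · rw [hS]
      simp only [Matrix.one_mul, Matrix.mul_one, Matrix.zero_mul, Matrix.mul_zero,
        Matrix.add_mul, Matrix.mul_add, Matrix.neg_mul, Matrix.mul_neg,
        Matrix.sub_mul, Matrix.mul_sub, ← Matrix.mul_assoc, hD21, hD12]
      abel
  have hdetL : L.det = 1 := by
    rw [hL, Matrix.det_fromBlocks_zero₂₁]; simp
  have hdetR : R.det = 1 := by
    rw [hR, Matrix.det_fromBlocks_zero₂₁]; simp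
  have hdetM : M.det = S.det := by
    have := congrArg Matrix.det key3
    rw [Matrix.det_mul, Matrix.det_mul, hdetL, hdetR,
      Matrix.det_fromBlocks_zero₁₂] at this
    simpa using this
  have hchain : N.det * Atil.det = S.det := by
    have := congrArg Matrix.det key1
    rw [Matrix.det_mul] at this
    rw [this, Matrix.det_one_add_mul_comm, key2, hdetM]
  have : IsUnit (N.det * Atil.det) := hchain ▸ hDC
  exact isUnit_of_mul_isUnit_right this
end

section
/- Let A1 ∈ ℝ^{n1×n1}, B1 ∈ ℝ^{n1×m}, C1 ∈ ℝ^{m×n1}, D1 ∈ ℝ^{m×m} and A2 ∈ ℝ^{n2×n2}, B2 ∈ ℝ^{n2×m}, C2 ∈ ℝ^{m×n2}, D2 ∈ ℝ^{m×m} with D1, D2 symmetric and D1 D2 = 0. Suppose P1, P2 are symmetric positive definite and L1, L2 are real matrices such that A1 P1^{-1} + P1^{-1} A1^T = -L1^T L1, B1 + A1 P1^{-1} C1^T = 0, A2 P2^{-1} + P2^{-1} A2^T = -L2^T L2, and B2 + A2 P2^{-1} C2^T = 0, and suppose the block matrix Q = [[P1 - C1^T D2 C1, -C1^T C2], [-C2^T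 C1, P2 - C2^T D1 C2]] is positive definite. Then every complex eigenvalue of the closed-loop matrix Ă = [[A1 + B1 D2 C1, B1 C2], [B2 C1, A2 + B2 D1 C2]] has real part less than or equal to zero. -/
/-!
With `Xᵢ = Pᵢ⁻¹`, the conditions `Bᵢ = -Aᵢ Xᵢ Cᵢᵀ` factor the closed-loop matrix as `Ă = K Q`
with `K = diag (A₁ X₁, A₂ X₂)`, and the Lyapunov equations say `K + Kᵀ = -Lᵀ L ≤ 0`. Hence the
Lyapunov function `V x = xᵀ Q x` does not increase along the closed loop: `(Ă x)ᵀ Q x =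
(K y)ᵀ y ≤ 0` for `y = Q x`. Writing an eigenvector for `μ` as `a + i b`, the sum of these
inequalities for `a` and `b` is `Re μ · (aᵀ Q a + bᵀ Q b) ≤ 0`, and `Q` is positive definite.
-/

open Matrix

namespace Matrix

variable {n : Type*} [Fintype n]

theorem exists_eigenvector_of_mem_spectrum [DecidableEq n] {K : Type*} [Field K]
    {M : Matrix n n K} {μ : K} (hμ : μ ∈ spectrum K M) : ∃ v ≠ 0, M *ᵥ v = μ • v := by
  rw [← spectrum_toLin', ← Module.End.hasEigenvalue_iff_mem_spectrum] at hμ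
  obtain ⟨v, hv⟩ := hμ.exists_hasEigenvector
  exact ⟨v, hv.2, by simpa using Module.End.mem_eigenspace_iff.mp hv.1⟩

theorem exists_re_im_eigenvector_of_mem_spectrum [DecidableEq n] {M : Matrix n n ℝ} {μ : ℂ}
    (hμ : μ ∈ spectrum ℂ (M.map Complex.ofReal)) :
    ∃ a b : n → ℝ, (a ≠ 0 ∨ b ≠ 0) ∧
      M *ᵥ a = μ.re • a - μ.im • b ∧ M *ᵥ b = μ.im • a + μ.re • b := by
  obtain ⟨v, hv0, hv⟩ := exists_eigenvector_of_mem_spectrum hμ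
  refine ⟨fun i => (v i).re, fun i => (v i).im, ?_, ?_, ?_⟩
  · by_contra! h
    exact hv0 (funext fun i => Complex.ext (congrFun h.1 i) (congrFun h.2 i))
  · funext i
    have h := congrArg Complex.re (congrFun hv i)
    simp only [mulVec, dotProduct, Matrix.map_apply, Pi.smul_apply, smul_eq_mul,
      Complex.re_sum, Complex.mul_re] at h
    simpa [mulVec, dotProduct] using h
  · funext i
    have h := congrArg Complex.im (congrFun hv i)
    simp only [mulVec, dotProduct, Matrix.map_apply, Pi.smul_apply, smul_eq_mul,
      Complex.im_sum, Complex.mul_im] at h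
    simpa [mulVec, dotProduct, add_comm] using h

theorem dotProduct_mulVec_comm_of_transpose_eq {R : Type*} [CommSemiring R]
    {Q : Matrix n n R} (hQ : Qᵀ = Q) (x y : n → R) : x ⬝ᵥ Q *ᵥ y = y ⬝ᵥ Q *ᵥ x := by
  rw [dotProduct_mulVec, ← vecMul_transpose, hQ, dotProduct_comm]

theorem re_le_zero_of_mem_spectrum_of_dissipative [DecidableEq n] {M Q : Matrix n n ℝ}
    (hQ : Qᵀ = Q) (hQpos : ∀ x, x ≠ 0 → 0 < x ⬝ᵥ Q *ᵥ x)
    (hM : ∀ x, M *ᵥ x ⬝ᵥ Q *ᵥ x ≤ 0) {μ : ℂ} (hμ : μ ∈ spectrum ℂ (M.map Complex.ofReal)) :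
    μ.re ≤ 0 := by
  obtain ⟨a, b, hab, ha, hb⟩ := exists_re_im_eigenvector_of_mem_spectrum hμ
  have hQnonneg (x : n → ℝ) : 0 ≤ x ⬝ᵥ Q *ᵥ x := by
    rcases eq_or_ne x 0 with rfl | hx
    · simp
    · exact (hQpos x hx).le
  have hpos : 0 < a ⬝ᵥ Q *ᵥ a + b ⬝ᵥ Q *ᵥ b := by
    rcases hab with h | h
    · exact add_pos_of_pos_of_nonneg (hQpos a h) (hQnonneg b)
    · exact add_pos_of_nonneg_of_pos (hQnonneg a) (hQpos b h)
  -- the cross terms `± μ.im • b ⬝ᵥ Q *ᵥ a` cancel because `Q` is symmetric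
  have hsum : M *ᵥ a ⬝ᵥ Q *ᵥ a + M *ᵥ b ⬝ᵥ Q *ᵥ b = μ.re * (a ⬝ᵥ Q *ᵥ a + b ⬝ᵥ Q *ᵥ b) := by
    rw [ha, hb, sub_dotProduct, add_dotProduct, smul_dotProduct, smul_dotProduct, smul_dotProduct,
      smul_dotProduct, dotProduct_mulVec_comm_of_transpose_eq hQ a b]
    ring
  by_contra! hre
  linarith [hM a, hM b, mul_pos hre hpos]

theorem mulVec_dotProduct_self_nonpos_of_add_transpose_eq {m : Type*} [Fintype m]
    {K : Matrix n n ℝ} {L : Matrix m n ℝ} (hK : K + Kᵀ = -(Lᵀ * L)) (y : n → ℝ) : K *ᵥ y ⬝ᵥ y ≤ 0 := by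
  have h : y ⬝ᵥ (K + Kᵀ) *ᵥ y = 2 * (K *ᵥ y ⬝ᵥ y) := by
    rw [add_mulVec, dotProduct_add, dotProduct_mulVec y Kᵀ, vecMul_transpose, dotProduct_comm y]
    ring
  rw [hK, neg_mulVec, ← mulVec_mulVec, dotProduct_neg, dotProduct_mulVec, vecMul_transpose] at h
  have hL := dotProduct_self_star_nonneg (L *ᵥ y)
  rw [star_trivial] at hL
  linarith

theorem isUnit_det_of_dotProduct_mulVec_pos [DecidableEq n] {K : Type*} [Field K]
    [PartialOrder K] {P : Matrix n n K} (hP : ∀ x, x ≠ 0 → 0 < x ⬝ᵥ P *ᵥ x) : IsUnit P.det := by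
  refine isUnit_iff_ne_zero.mpr fun h => ?_
  obtain ⟨v, hv0, hv⟩ := exists_mulVec_eq_zero_iff.mpr h
  simpa [hv] using hP v hv0

theorem fromBlocks_feedback_eq_mul {n₁ n₂ m : Type*} [Fintype n₁] [Fintype n₂] [Fintype m]
    [DecidableEq n₁] [DecidableEq n₂]
    {A₁ X₁ P₁ : Matrix n₁ n₁ ℝ} {A₂ X₂ P₂ : Matrix n₂ n₂ ℝ} {B₁ : Matrix n₁ m ℝ}
    {B₂ : Matrix n₂ m ℝ} {C₁ : Matrix m n₁ ℝ} {C₂ : Matrix m n₂ ℝ} (D₁ D₂ : Matrix m m ℝ)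
    (hX₁ : X₁ * P₁ = 1) (hX₂ : X₂ * P₂ = 1)
    (hB₁ : B₁ + A₁ * X₁ * C₁ᵀ = 0) (hB₂ : B₂ + A₂ * X₂ * C₂ᵀ = 0) :
    fromBlocks (A₁ + B₁ * D₂ * C₁) (B₁ * C₂) (B₂ * C₁) (A₂ + B₂ * D₁ * C₂) =
      fromBlocks (A₁ * X₁) 0 0 (A₂ * X₂) *
        fromBlocks (P₁ - C₁ᵀ * D₂ * C₁) (-(C₁ᵀ * C₂)) (-(C₂ᵀ * C₁)) (P₂ - C₂ᵀ * D₁ * C₂) := by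
  rw [eq_neg_of_add_eq_zero_left hB₁, eq_neg_of_add_eq_zero_left hB₂, fromBlocks_multiply]
  congr 1 <;> simp [sub_eq_add_neg, Matrix.mul_add, Matrix.mul_assoc, hX₁, hX₂]

end Matrix

theorem stmt_13_general {n1 n2 m l1 l2 : ℕ}
    (A1 : Matrix (Fin n1) (Fin n1) ℝ) (B1 : Matrix (Fin n1) (Fin m) ℝ)
    (C1 : Matrix (Fin m) (Fin n1) ℝ) (D1 : Matrix (Fin m) (Fin m) ℝ)
    (A2 : Matrix (Fin n2) (Fin n2) ℝ) (B2 : Matrix (Fin n2) (Fin m) ℝ)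
    (C2 : Matrix (Fin m) (Fin n2) ℝ) (D2 : Matrix (Fin m) (Fin m) ℝ)
    (P1 : Matrix (Fin n1) (Fin n1) ℝ) (P2 : Matrix (Fin n2) (Fin n2) ℝ)
    (L1 : Matrix (Fin l1) (Fin n1) ℝ) (L2 : Matrix (Fin l2) (Fin n2) ℝ)
    (hD1symm : D1ᵀ = D1) (hD2symm : D2ᵀ = D2)
    (hP1symm : P1ᵀ = P1)
    (hP1pd : ∀ x : Fin n1 → ℝ, x ≠ 0 → 0 < x ⬝ᵥ P1.mulVec x)
    (hP2symm : P2ᵀ = P2)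
    (hP2pd : ∀ x : Fin n2 → ℝ, x ≠ 0 → 0 < x ⬝ᵥ P2.mulVec x)
    (h1a : A1 * P1⁻¹ + P1⁻¹ * A1ᵀ = -(L1ᵀ * L1))
    (h1b : B1 + A1 * P1⁻¹ * C1ᵀ = 0)
    (h2a : A2 * P2⁻¹ + P2⁻¹ * A2ᵀ = -(L2ᵀ * L2))
    (h2b : B2 + A2 * P2⁻¹ * C2ᵀ = 0)
    (hQpd : ∀ x : (Fin n1 ⊕ Fin n2) → ℝ, x ≠ 0 →
      0 < x ⬝ᵥ (Matrix.fromBlocks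
          (P1 - C1ᵀ * D2 * C1) (-(C1ᵀ * C2))
          (-(C2ᵀ * C1)) (P2 - C2ᵀ * D1 * C2)).mulVec x) :
    ∀ μ ∈ spectrum ℂ
        ((Matrix.fromBlocks (A1 + B1 * D2 * C1) (B1 * C2)
            (B2 * C1) (A2 + B2 * D1 * C2)).map Complex.ofReal),
      μ.re ≤ 0 := by
  intro μ hμ
  have hP1inv : P1⁻¹ * P1 = 1 := nonsing_inv_mul P1 (isUnit_det_of_dotProduct_mulVec_pos hP1pd)
  have hP2inv : P2⁻¹ * P2 = 1 := nonsing_inv_mul P2 (isUnit_det_of_dotProduct_mulVec_pos hP2pd)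
  rw [fromBlocks_feedback_eq_mul D1 D2 hP1inv hP2inv h1b h2b] at hμ
  set K := fromBlocks (A1 * P1⁻¹) 0 0 (A2 * P2⁻¹)
  set Q := fromBlocks (P1 - C1ᵀ * D2 * C1) (-(C1ᵀ * C2)) (-(C2ᵀ * C1)) (P2 - C2ᵀ * D1 * C2)
  have hK : K + Kᵀ = -((fromBlocks L1 0 0 L2)ᵀ * fromBlocks L1 0 0 L2) := by
    simp [K, fromBlocks_transpose, fromBlocks_multiply, fromBlocks_add, fromBlocks_neg,
      transpose_nonsing_inv, hP1symm, hP2symm, h1a, h2a]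
  have hQ : Qᵀ = Q := by
    simp [Q, fromBlocks_transpose, transpose_mul, hP1symm, hP2symm, hD1symm, hD2symm,
      Matrix.mul_assoc]
  refine re_le_zero_of_mem_spectrum_of_dissipative hQ hQpd (fun x => ?_) hμ
  rw [← mulVec_mulVec]
  exact mulVec_dotProduct_self_nonpos_of_add_transpose_eq hK _

theorem stmt_13 {n1 n2 m l1 l2 : ℕ}
    (A1 : Matrix (Fin n1) (Fin n1) ℝ) (B1 : Matrix (Fin n1) (Fin m) ℝ)
    (C1 : Matrix (Fin m) (Fin n1) ℝ) (D1 : Matrix (Fin m) (Fin m) ℝ)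
    (A2 : Matrix (Fin n2) (Fin n2) ℝ) (B2 : Matrix (Fin n2) (Fin m) ℝ)
    (C2 : Matrix (Fin m) (Fin n2) ℝ) (D2 : Matrix (Fin m) (Fin m) ℝ)
    (P1 : Matrix (Fin n1) (Fin n1) ℝ) (P2 : Matrix (Fin n2) (Fin n2) ℝ)
    (L1 : Matrix (Fin l1) (Fin n1) ℝ) (L2 : Matrix (Fin l2) (Fin n2) ℝ)
    (hD1symm : D1ᵀ = D1) (hD2symm : D2ᵀ = D2) (hD12 : D1 * D2 = 0)
    (hP1symm : P1ᵀ = P1)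
    (hP1pd : ∀ x : Fin n1 → ℝ, x ≠ 0 → 0 < x ⬝ᵥ P1.mulVec x)
    (hP2symm : P2ᵀ = P2)
    (hP2pd : ∀ x : Fin n2 → ℝ, x ≠ 0 → 0 < x ⬝ᵥ P2.mulVec x)
    (h1a : A1 * P1⁻¹ + P1⁻¹ * A1ᵀ = -(L1ᵀ * L1))
    (h1b : B1 + A1 * P1⁻¹ * C1ᵀ = 0)
    (h2a : A2 * P2⁻¹ + P2⁻¹ * A2ᵀ = -(L2ᵀ * L2))
    (h2b : B2 + A2 * P2⁻¹ * C2ᵀ = 0)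
    (hQpd : ∀ x : (Fin n1 ⊕ Fin n2) → ℝ, x ≠ 0 →
      0 < x ⬝ᵥ (Matrix.fromBlocks
          (P1 - C1ᵀ * D2 * C1) (-(C1ᵀ * C2))
          (-(C2ᵀ * C1)) (P2 - C2ᵀ * D1 * C2)).mulVec x) :
    ∀ μ ∈ spectrum ℂ
        ((Matrix.fromBlocks (A1 + B1 * D2 * C1) (B1 * C2)
            (B2 * C1) (A2 + B2 * D1 * C2)).map Complex.ofReal),
      μ.re ≤ 0 :=
  stmt_13_general A1 B1 C1 D1 A2 B2 C2 D2 P1 P2 L1 L2 hD1symm hD2symm hP1symm hP1pd hP2symm hP2pd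
    h1a h1b h2a h2b hQpd
end
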